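/- For any initial qubit state φ = (α,β)ᵗ with |α|²+|β|²=1, the expectations of the Hadamard walk at times 1, 2 and 3 are E(X_1^φ) = E(X_2^φ) = −(α·conj(β) + conj(α)·β) and E(X_3^φ) = (1/2)·(|β|² − |α|²) − (α·conj(β) + conj(α)·β). -/

import Mathlib

noncomputable section
open Matrix

/-- `P = (1/√2)·[[1,1],[0,0]]` -/
def matP : Matrix (Fin 2) (Fin 2) ℂ := (Real.sqrt 2 : ℂ)⁻¹ • !![1, 1; 0, 0]

/-- `Q = (1/√2)·[[0,0],[1,-1]]` -/
def matQ : Matrix (Fin 2) (Fin 2) ℂ := (Real.sqrt 2 : ℂ)⁻¹ • !![0, 0; 1, -1]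

/-- The amplitudes of the Hadamard walk: `Ψ_k^{(0)}(φ) = φ` if `k = 0` and `0` otherwise,
and `Ψ_k^{(n+1)}(φ) = Q·Ψ_{k-1}^{(n)}(φ) + P·Ψ_{k+1}^{(n)}(φ)`. -/
def Psi (φ : Fin 2 → ℂ) : ℕ → ℤ → (Fin 2 → ℂ)
  | 0, k => if k = 0 then φ else 0
  | n+1, k => matQ.mulVec (Psi φ n (k-1)) + matP.mulVec (Psi φ n (k+1))

/-- The Euclidean norm of a vector in `ℂ²`. -/
def vnorm (v : Fin 2 → ℂ) : ℝ := ‖(EuclideanSpace.equiv (Fin 2) ℂ).symm v‖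

/-- The expectation `E(X_n^φ) = Σ_{k ∈ ℤ} k·‖Ψ_k^{(n)}(φ)‖²`. -/
def expectation (φ : Fin 2 → ℂ) (n : ℕ) : ℝ := ∑' k : ℤ, (k : ℝ) * (vnorm (Psi φ n k))^2

lemma vnormC (v : Fin 2 → ℂ) :
    ((vnorm v : ℝ) : ℂ)^2 = v 0 * (starRingEnd ℂ) (v 0) + v 1 * (starRingEnd ℂ) (v 1) := by
  have h : vnorm v ^ 2 = Complex.normSq (v 0) + Complex.normSq (v 1) := by
    rw [vnorm, EuclideanSpace.norm_eq, Real.sq_sqrt (by positivity)]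
    simp [Fin.sum_univ_two, Complex.sq_norm]
  rw [← Complex.ofReal_pow, h]
  push_cast [Complex.mul_conj]
  ring

lemma Psi_eq_zero (φ : Fin 2 → ℂ) : ∀ (n : ℕ) (k : ℤ), (n : ℤ) < |k| → Psi φ n k = 0 := by
  intro n
  induction n with
  | zero =>
    intro k hk
    have : k ≠ 0 := by rintro rfl; simp at hk
    simp [Psi, this]
  | succ n ih =>
    intro k hk
    have h1 : Psi φ n (k-1) = 0 := ih _ (by
      rcases lt_abs.mp hk with h | h <;> rw [lt_abs] <;> push_cast at * <;> omega)
    have h2 : Psi φ n (k+1) = 0 := ih _ (by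
      rcases lt_abs.mp hk with h | h <;> rw [lt_abs] <;> push_cast at * <;> omega)
    simp [Psi, h1, h2]

lemma expectation_eq (φ : Fin 2 → ℂ) (n : ℕ) :
    expectation φ n = ∑ k ∈ Finset.Icc (-(n:ℤ)) n, (k : ℝ) * (vnorm (Psi φ n k))^2 := by
  apply tsum_eq_sum
  intro k hk
  have : Psi φ n k = 0 := by
    apply Psi_eq_zero
    simp [Finset.mem_Icc] at hk
    rw [lt_abs]; omega
  simp [this, vnorm]

lemma sqrt2_inv_sq : ((Real.sqrt 2 : ℝ) : ℂ)⁻¹ ^ 2 = 1/2 := by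
  rw [inv_pow, ← Complex.ofReal_pow, Real.sq_sqrt (by norm_num)]
  norm_num

lemma sqrt2_inv_pow4 : ((Real.sqrt 2 : ℝ) : ℂ)⁻¹ ^ 4 = 1/4 := by
  have := sqrt2_inv_sq
  calc ((Real.sqrt 2 : ℝ) : ℂ)⁻¹ ^ 4 = (((Real.sqrt 2 : ℝ) : ℂ)⁻¹ ^ 2)^2 := by ring
  _ = 1/4 := by rw [this]; norm_num

lemma sqrt2_inv_pow6 : ((Real.sqrt 2 : ℝ) : ℂ)⁻¹ ^ 6 = 1/8 := by
  have := sqrt2_inv_sq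
  calc ((Real.sqrt 2 : ℝ) : ℂ)⁻¹ ^ 6 = (((Real.sqrt 2 : ℝ) : ℂ)⁻¹ ^ 2)^3 := by ring
  _ = 1/8 := by rw [this]; norm_num

set_option maxHeartbeats 2000000

theorem expectation_first_three_steps (α β : ℂ)
    (hnorm : ‖α‖ ^ 2 + ‖β‖ ^ 2 = 1) :
    ((expectation ![α, β] 1 : ℝ) : ℂ) = -(α * (starRingEnd ℂ) β + (starRingEnd ℂ) α * β) ∧
    ((expectation ![α, β] 2 : ℝ) : ℂ) = -(α * (starRingEnd ℂ) β + (starRingEnd ℂ) α * β) ∧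
    ((expectation ![α, β] 3 : ℝ) : ℂ)
      = (1 / 2) * ((‖β‖ : ℂ) ^ 2 - (‖α‖ : ℂ) ^ 2)
        - (α * (starRingEnd ℂ) β + (starRingEnd ℂ) α * β) := by
  have hC : α * (starRingEnd ℂ) α + β * (starRingEnd ℂ) β = 1 := by
    have := congrArg (Complex.ofReal) hnorm
    push_cast [← Complex.sq_norm, Complex.mul_conj] at this ⊢
    exact_mod_cast this
  have habs : ((‖β‖ : ℂ)) ^ 2 = β * (starRingEnd ℂ) β := by
    rw [← Complex.ofReal_pow, Complex.sq_norm, Complex.mul_conj]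
  have habs2 : ((‖α‖ : ℂ)) ^ 2 = α * (starRingEnd ℂ) α := by
    rw [← Complex.ofReal_pow, Complex.sq_norm, Complex.mul_conj]
  refine ⟨?_, ?_, ?_⟩
  · rw [expectation_eq, show Finset.Icc (-(1:ℕ):ℤ) (1:ℕ) = {-1,0,1} from by decide]
    push_cast [Finset.sum_insert, Finset.mem_insert, vnormC]
    simp [Psi, matP, matQ, Matrix.mulVec, dotProduct, Fin.sum_univ_two]
    ring_nf
    rw [sqrt2_inv_sq]
    ring
  · rw [expectation_eq, show Finset.Icc (-(2:ℕ):ℤ) (2:ℕ) = {-2,-1,0,1,2} from by decide]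
    push_cast [Finset.sum_insert, Finset.mem_insert, vnormC]
    simp [Psi, matP, matQ, Matrix.mulVec, dotProduct, Fin.sum_univ_two]
    ring_nf
    rw [sqrt2_inv_pow4]
    ring
  · rw [expectation_eq, show Finset.Icc (-(3:ℕ):ℤ) (3:ℕ) = {-3,-2,-1,0,1,2,3} from by decide]
    push_cast [Finset.sum_insert, Finset.mem_insert, vnormC]
    simp [Psi, matP, matQ, Matrix.mulVec, dotProduct, Fin.sum_univ_two]
    rw [habs, habs2]
    ring_nf
    rw [sqrt2_inv_pow6]
    ring
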